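/- Let H ∈ (0,1/2) and s > 0. Then for every t > s, the function t ↦ K_H(t,s) is differentiable at t with derivative ∂K_H(t,s)/∂t = c_H · (H − 1/2) · (t/s)^{H − 1/2} · (t − s)^{H − 3/2}. -/

import Mathlib

/-!
Write `a = H - 1/2`. Differentiating the product `(r/s)^a (r-s)^a` gives two terms, and the
one coming from the factor `(r/s)^a`, namely `a s^{-a} t^{a-1} (t-s)^a`, is exactly cancelled by
the derivative `-a s^{-a} t^{a-1}(t-s)^a` of the integral term (fundamental theorem of calculus,
applicable since the integrand is continuous at `t > s` and integrable at `s` for `a > -1`).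
Only the term `a (t/s)^a (t-s)^{a-1}` survives.
-/

open MeasureTheory Set
open scoped ENNReal NNReal

noncomputable section

/-- The Beta function. -/
def realBeta (x y : ℝ) : ℝ := Real.Gamma x * Real.Gamma y / Real.Gamma (x + y)

/-- The constant `c_H = (2H/((1−2H)·B(1−2H, H+1/2)))^{1/2}`. -/
def cH (H : ℝ) : ℝ := Real.sqrt (2 * H / ((1 - 2 * H) * realBeta (1 - 2 * H) (H + 1 / 2)))

/-- The kernel
`K_H(t,s) = c_H[(t/s)^{H−1/2}(t−s)^{H−1/2} + (1/2−H)s^{1/2−H}∫_s^t u^{H−3/2}(u−s)^{H−1/2}du]`. -/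
def KH (H t s : ℝ) : ℝ :=
  cH H * ((t / s) ^ (H - 1 / 2) * (t - s) ^ (H - 1 / 2) +
    (1 / 2 - H) * s ^ (1 / 2 - H) *
      ∫ u in Set.Ioo s t, u ^ (H - 3 / 2) * (u - s) ^ (H - 1 / 2))

open Filter Topology

theorem hasDerivAt_integral_Ioo_right {E : Type*} [NormedAddCommGroup E] [NormedSpace ℝ E]
    [CompleteSpace E] {f : ℝ → E} {a b : ℝ} (hab : a < b) (hf : IntervalIntegrable f volume a b)
    (hmeas : StronglyMeasurableAtFilter f (𝓝 b)) (hb : ContinuousAt f b) :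
    HasDerivAt (fun r => ∫ u in Ioo a r, f u) (f b) b := by
  refine (intervalIntegral.integral_hasDerivAt_right hf hmeas hb).congr_of_eventuallyEq ?_
  filter_upwards [lt_mem_nhds hab] with r hr
  rw [intervalIntegral.integral_of_le hr.le, integral_Ioc_eq_integral_Ioo]

section Kernel

variable {a b s t : ℝ}

theorem continuousAt_rpow_mul_sub_rpow (hs : 0 < s) (ht : s < t) :
    ContinuousAt (fun u : ℝ => u ^ b * (u - s) ^ a) t :=
  (Real.continuousAt_rpow_const t b (Or.inl (hs.trans ht).ne')).mul
    ((continuousAt_id.sub continuousAt_const).rpow_const (Or.inl (sub_pos.2 ht).ne'))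

theorem intervalIntegrable_rpow_mul_sub_rpow (ha : -1 < a) (hs : 0 < s) (ht : s ≤ t) :
    IntervalIntegrable (fun u : ℝ => u ^ b * (u - s) ^ a) volume s t := by
  have hsub : IntervalIntegrable (fun u : ℝ => (u - s) ^ a) volume s t := by
    simpa using (intervalIntegral.intervalIntegrable_rpow' (a := 0) (b := t - s) ha).comp_sub_right s
  refine hsub.continuousOn_mul fun u hu => ?_
  rw [uIcc_of_le ht] at hu
  exact (Real.continuousAt_rpow_const u b (Or.inl (hs.trans_le hu.1).ne')).continuousWithinAt

theorem hasDerivAt_integral_Ioo_rpow_mul_sub_rpow (ha : -1 < a) (hs : 0 < s) (ht : s < t) :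
    HasDerivAt (fun r => ∫ u in Ioo s r, u ^ b * (u - s) ^ a) (t ^ b * (t - s) ^ a) t := by
  have hcont : ∀ x ∈ Ioi s, ContinuousAt (fun u : ℝ => u ^ b * (u - s) ^ a) x :=
    fun x hx => continuousAt_rpow_mul_sub_rpow hs hx
  exact hasDerivAt_integral_Ioo_right ht (intervalIntegrable_rpow_mul_sub_rpow ha hs ht.le)
    (ContinuousAt.stronglyMeasurableAtFilter isOpen_Ioi hcont t ht) (hcont t ht)

theorem hasDerivAt_kernel (ha : -1 < a) (hs : 0 < s) (ht : s < t) :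
    HasDerivAt (fun r => (r / s) ^ a * (r - s) ^ a
        - a * s ^ (-a) * ∫ u in Ioo s r, u ^ (a - 1) * (u - s) ^ a)
      (a * (t / s) ^ a * (t - s) ^ (a - 1)) t := by
  have hquot : HasDerivAt (fun r : ℝ => (r / s) ^ a) (1 / s * a * (t / s) ^ (a - 1)) t :=
    ((hasDerivAt_id t).div_const s).rpow_const (Or.inl (div_pos (hs.trans ht) hs).ne')
  have hdiff : HasDerivAt (fun r : ℝ => (r - s) ^ a) (1 * a * (t - s) ^ (a - 1)) t :=
    ((hasDerivAt_id t).sub_const s).rpow_const (Or.inl (sub_pos.2 ht).ne')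
  refine ((hquot.mul hdiff).sub
    ((hasDerivAt_integral_Ioo_rpow_mul_sub_rpow ha hs ht).const_mul (a * s ^ (-a)))).congr_deriv ?_
  rw [Real.div_rpow (hs.trans ht).le hs.le, Real.div_rpow (hs.trans ht).le hs.le,
    Real.rpow_neg hs.le, Real.rpow_sub_one hs.ne']
  field_simp
  ring

end Kernel

theorem stmt16_general (H s : ℝ) (hH0 : 0 < H) (hs : 0 < s) :
    ∀ t : ℝ, s < t →
      HasDerivAt (fun r => KH H r s)
        (cH H * (H - 1 / 2) * (t / s) ^ (H - 1 / 2) * (t - s) ^ (H - 3 / 2)) t := by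
  intro t ht
  have key := (hasDerivAt_kernel (a := H - 1 / 2) (by linarith) hs ht).const_mul (cH H)
  have h32 : H - 3 / 2 = H - 1 / 2 - 1 := by ring
  have h12 : 1 / 2 - H = -(H - 1 / 2) := by ring
  simp only [KH, h32, h12, neg_mul, ← sub_eq_add_neg]
  simpa only [mul_assoc] using key

/-- for `H ∈ (0,1/2)` and `0 < s < t`, the map `t ↦ K_H(t,s)` is
differentiable at `t` with derivative `c_H(H−1/2)(t/s)^{H−1/2}(t−s)^{H−3/2}`. -/
theorem stmt16 (H s : ℝ) (hH0 : 0 < H) (hH : H < 1 / 2) (hs : 0 < s) :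
    ∀ t : ℝ, s < t →
      HasDerivAt (fun r => KH H r s)
        (cH H * (H - 1 / 2) * (t / s) ^ (H - 1 / 2) * (t - s) ^ (H - 3 / 2)) t :=
  stmt16_general H s hH0 hs
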